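/- Let n ≥ 5 and let α, β ∈ K satisfy α ≠ β and α ≠ −β. Suppose T : Mat_n(K) → Mat_n(K) is a bijective K-linear map stabilizing det^{(α,β)}, and suppose C = (c_{ij}) has all entries nonzero, σ, τ ∈ S_n satisfy sgn(σ)·sgn(τ) = 1 with permutation matrices P, Q, and either T(A) = C ∗ (P·A·Q) for all A or T(A) = C ∗ (P·Aᵀ·Q) for all A. Then rank(C) = 1. -/
import Mathlib


open Matrix Finset

noncomputable def evenDet {K : Type*} [Field K] {n : ℕ} (A : Matrix (Fin n) (Fin n) K) : K :=
  ∑ σ ∈ Finset.univ.filter (fun σ : Equiv.Perm (Fin n) => Equiv.Perm.sign σ = 1),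
    ∏ i, A i (σ i)

noncomputable def oddDet {K : Type*} [Field K] {n : ℕ} (A : Matrix (Fin n) (Fin n) K) : K :=
  ∑ σ ∈ Finset.univ.filter (fun σ : Equiv.Perm (Fin n) => Equiv.Perm.sign σ = -1),
    ∏ i, A i (σ i)

/-- The generalized determinant `det^{(α,β)}`. -/
noncomputable def gdet {K : Type*} [Field K] {n : ℕ} (α β : K) (A : Matrix (Fin n) (Fin n) K) : K :=
  α * evenDet A + β * oddDet A

/-- The permutation matrix `P = (δ_{i, σ(j)})`. -/
def permMat (K : Type*) [Field K] {n : ℕ} (σ : Equiv.Perm (Fin n)) : Matrix (Fin n) (Fin n) K :=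
  fun i j => if i = σ j then 1 else 0

section AuxLemmas

variable {K : Type*} [Field K] {n : ℕ}

private lemma prod_select_aux (f : Fin n → K) (μ π : Equiv.Perm (Fin n)) :
    (∏ x, if π x = μ x then f x else 0) = if π = μ then ∏ x, f x else 0 := by
  by_cases h : π = μ
  · subst h; simp
  · have hx : ∃ x, π x ≠ μ x := by
      by_contra hc; push_neg at hc; exact h (Equiv.ext hc)
    obtain ⟨x, hx⟩ := hx
    rw [if_neg h]
    exact Finset.prod_eq_zero (Finset.mem_univ x) (by simp [hx])

private lemma gdet_select (α β : K) (f : Fin n → K) (μ : Equiv.Perm (Fin n)) :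
    gdet α β (Matrix.of fun x y => if y = μ x then f x else 0)
      = (if Equiv.Perm.sign μ = 1 then α else β) * ∏ x, f x := by
  have he : evenDet (Matrix.of fun x y => if y = μ x then f x else 0)
      = if Equiv.Perm.sign μ = 1 then ∏ x, f x else 0 := by
    unfold evenDet
    calc (∑ π ∈ Finset.univ.filter (fun π : Equiv.Perm (Fin n) => Equiv.Perm.sign π = 1),
            ∏ x, (Matrix.of fun x y => if y = μ x then f x else 0) x (π x))
        = ∑ π ∈ Finset.univ.filter (fun π : Equiv.Perm (Fin n) => Equiv.Perm.sign π = 1),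
            (if π = μ then ∏ x, f x else 0) := by
          refine Finset.sum_congr rfl fun π _ => ?_
          simpa using prod_select_aux f μ π
      _ = _ := by
          rw [Finset.sum_ite_eq' _ μ (fun _ => ∏ x, f x)]
          simp
  have ho : oddDet (Matrix.of fun x y => if y = μ x then f x else 0)
      = if Equiv.Perm.sign μ = -1 then ∏ x, f x else 0 := by
    unfold oddDet
    calc (∑ π ∈ Finset.univ.filter (fun π : Equiv.Perm (Fin n) => Equiv.Perm.sign π = -1),
            ∏ x, (Matrix.of fun x y => if y = μ x then f x else 0) x (π x))
        = ∑ π ∈ Finset.univ.filter (fun π : Equiv.Perm (Fin n) => Equiv.Perm.sign π = -1),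
            (if π = μ then ∏ x, f x else 0) := by
          refine Finset.sum_congr rfl fun π _ => ?_
          simpa using prod_select_aux f μ π
      _ = _ := by
          rw [Finset.sum_ite_eq' _ μ (fun _ => ∏ x, f x)]
          simp
  unfold gdet
  rw [he, ho]
  rcases Int.units_eq_one_or (Equiv.Perm.sign μ) with h | h <;> simp [h]

private lemma permMat_mul_mul_apply (σ τ : Equiv.Perm (Fin n)) (A : Matrix (Fin n) (Fin n) K)
    (i j : Fin n) :
    (permMat K σ * A * permMat K τ) i j = A (σ⁻¹ i) (τ j) := by
  have h1 : ∀ k, (permMat K σ * A) i k = A (σ⁻¹ i) k := by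
    intro k
    simp only [Matrix.mul_apply, permMat]
    rw [Finset.sum_eq_single (σ⁻¹ i)]
    · simp
    · intro b _ hb
      rw [if_neg, zero_mul]
      intro h; exact hb (by simp [h])
    · simp
  simp only [Matrix.mul_apply, permMat, h1]
  rw [Finset.sum_eq_single (τ j)]
  · simp
  · intro b _ hb; rw [if_neg hb, mul_zero]
  · simp

private lemma exists_perm_prescribed (hn : 5 ≤ n) (s : ℤˣ) {i k m j l q : Fin n}
    (hik : i ≠ k) (him : i ≠ m) (hkm : k ≠ m)
    (hjl : j ≠ l) (hjq : j ≠ q) (hlq : l ≠ q) :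
    ∃ μ : Equiv.Perm (Fin n), Equiv.Perm.sign μ = s ∧ μ i = j ∧ μ k = l ∧ μ m = q := by
  classical
  let e : {x : Fin n // x = i ∨ x = k ∨ x = m} ≃ {x : Fin n // x = j ∨ x = l ∨ x = q} :=
    { toFun := fun x => if x.1 = i then ⟨j, Or.inl rfl⟩ else if x.1 = k then
        ⟨l, Or.inr (Or.inl rfl)⟩ else ⟨q, Or.inr (Or.inr rfl)⟩
      invFun := fun y => if y.1 = j then ⟨i, Or.inl rfl⟩ else if y.1 = l then
        ⟨k, Or.inr (Or.inl rfl)⟩ else ⟨m, Or.inr (Or.inr rfl)⟩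
      left_inv := fun x => by
        obtain ⟨x, hx⟩ := x
        rcases hx with rfl | rfl | rfl <;>
          simp [hik.symm, him.symm, hkm.symm, hjl.symm, hjq.symm, hlq.symm, hjl, hjq, hlq]
      right_inv := fun y => by
        obtain ⟨y, hy⟩ := y
        rcases hy with rfl | rfl | rfl <;>
          simp [hik.symm, him.symm, hkm.symm, hjl.symm, hjq.symm, hlq.symm, hik, him, hkm] }
  set ν := e.extendSubtype with hν
  have hνi : ν i = j := by
    rw [Equiv.extendSubtype_apply_of_mem e i (Or.inl rfl)]
    simp only [e, Equiv.coe_fn_mk]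
    simp
  have hνk : ν k = l := by
    rw [Equiv.extendSubtype_apply_of_mem e k (Or.inr (Or.inl rfl))]
    simp only [e, Equiv.coe_fn_mk]
    simp [hik.symm]
  have hνm : ν m = q := by
    rw [Equiv.extendSubtype_apply_of_mem e m (Or.inr (Or.inr rfl))]
    simp only [e, Equiv.coe_fn_mk]
    simp [him.symm, hkm.symm]
  by_cases hs : Equiv.Perm.sign ν = s
  · exact ⟨ν, hs, hνi, hνk, hνm⟩
  · have hcard : 1 < (({i, k, m} : Finset (Fin n))ᶜ).card := by
      have h3 : ({i, k, m} : Finset (Fin n)).card ≤ 3 := by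
        refine (Finset.card_insert_le _ _).trans ?_
        refine Nat.add_le_add_right ?_ 1
        refine (Finset.card_insert_le _ _).trans ?_
        simp
      rw [Finset.card_compl]
      simp only [Fintype.card_fin]
      omega
    obtain ⟨a, ha, b, hb, hab⟩ := Finset.one_lt_card.mp hcard
    simp only [Finset.mem_compl, Finset.mem_insert, Finset.mem_singleton, not_or] at ha hb
    refine ⟨ν * Equiv.swap a b, ?_, ?_, ?_, ?_⟩
    · rw [Equiv.Perm.sign_mul, Equiv.Perm.sign_swap hab]
      rcases Int.units_eq_one_or (Equiv.Perm.sign ν) with h | h <;>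
        rcases Int.units_eq_one_or s with h' | h' <;>
          simp_all
    · simp [Equiv.Perm.mul_apply, Equiv.swap_apply_of_ne_of_ne (Ne.symm ha.1) (Ne.symm hb.1), hνi]
    · simp [Equiv.Perm.mul_apply,
        Equiv.swap_apply_of_ne_of_ne (Ne.symm ha.2.1) (Ne.symm hb.2.1), hνk]
    · simp [Equiv.Perm.mul_apply,
        Equiv.swap_apply_of_ne_of_ne (Ne.symm ha.2.2) (Ne.symm hb.2.2), hνm]

private lemma three_term (C : Matrix (Fin n) (Fin n) K) (hC : ∀ i j, C i j ≠ 0)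
    (s : ℤˣ)
    (hprod : ∀ μ : Equiv.Perm (Fin n), Equiv.Perm.sign μ = s → ∏ x, C x (μ x) = 1)
    (hexists : ∀ (i k m j l q : Fin n), i ≠ k → i ≠ m → k ≠ m → j ≠ l → j ≠ q → l ≠ q →
      ∃ μ : Equiv.Perm (Fin n), Equiv.Perm.sign μ = s ∧ μ i = j ∧ μ k = l ∧ μ m = q)
    {i k m j l q : Fin n}
    (hik : i ≠ k) (him : i ≠ m) (hkm : k ≠ m)
    (hjl : j ≠ l) (hjq : j ≠ q) (hlq : l ≠ q) :
    C i j * (C k l * C m q) = C i l * (C k q * C m j) := by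
  classical
  obtain ⟨μ, hsμ, hi, hk, hm⟩ := hexists i k m j l q hik him hkm hjl hjq hlq
  set c : Equiv.Perm (Fin n) := Equiv.swap j q * Equiv.swap j l with hc
  have hμ' : Equiv.Perm.sign (c * μ) = s := by
    rw [Equiv.Perm.sign_mul, hc, Equiv.Perm.sign_mul,
      Equiv.Perm.sign_swap hjq, Equiv.Perm.sign_swap hjl, hsμ]
    simp
  have hcj : c j = l := by
    rw [hc, Equiv.Perm.mul_apply, Equiv.swap_apply_left,
      Equiv.swap_apply_of_ne_of_ne hjl.symm hlq]
  have hcl : c l = q := by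
    rw [hc, Equiv.Perm.mul_apply, Equiv.swap_apply_right, Equiv.swap_apply_left]
  have hcq : c q = j := by
    rw [hc, Equiv.Perm.mul_apply, Equiv.swap_apply_of_ne_of_ne hjq.symm hlq.symm,
      Equiv.swap_apply_right]
  have hmem1 : i ∉ ({k, m} : Finset (Fin n)) := by simp [hik, him]
  have hmem2 : k ∉ ({m} : Finset (Fin n)) := by simp [hkm]
  have hprodS : ∀ π : Equiv.Perm (Fin n),
      ∏ x ∈ ({i, k, m} : Finset (Fin n)), C x (π x)
        = C i (π i) * (C k (π k) * C m (π m)) := by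
    intro π
    rw [Finset.prod_insert hmem1, Finset.prod_insert hmem2, Finset.prod_singleton]
  have hcompl : ∏ x ∈ (({i, k, m} : Finset (Fin n))ᶜ), C x ((c * μ) x)
      = ∏ x ∈ (({i, k, m} : Finset (Fin n))ᶜ), C x (μ x) := by
    refine Finset.prod_congr rfl fun x hx => ?_
    simp only [Finset.mem_compl, Finset.mem_insert, Finset.mem_singleton, not_or] at hx
    have h1 : μ x ≠ j := fun h => hx.1 (μ.injective (h.trans hi.symm))
    have h2 : μ x ≠ l := fun h => hx.2.1 (μ.injective (h.trans hk.symm))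
    have h3 : μ x ≠ q := fun h => hx.2.2 (μ.injective (h.trans hm.symm))
    rw [Equiv.Perm.mul_apply, hc, Equiv.Perm.mul_apply,
      Equiv.swap_apply_of_ne_of_ne h1 h2, Equiv.swap_apply_of_ne_of_ne h1 h3]
  have hQ : (∏ x ∈ (({i, k, m} : Finset (Fin n))ᶜ), C x (μ x)) ≠ 0 :=
    Finset.prod_ne_zero_iff.mpr fun x _ => hC _ _
  have e1 : C i j * (C k l * C m q) * ∏ x ∈ (({i, k, m} : Finset (Fin n))ᶜ), C x (μ x) = 1 := by
    rw [← hi, ← hk, ← hm, ← hprodS μ, Finset.prod_mul_prod_compl]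
    exact hprod μ hsμ
  have e2 : C i l * (C k q * C m j) * ∏ x ∈ (({i, k, m} : Finset (Fin n))ᶜ), C x (μ x) = 1 := by
    have vi : (c * μ) i = l := by rw [Equiv.Perm.mul_apply, hi, hcj]
    have vk : (c * μ) k = q := by rw [Equiv.Perm.mul_apply, hk, hcl]
    have vm : (c * μ) m = j := by rw [Equiv.Perm.mul_apply, hm, hcq]
    rw [← vi, ← vk, ← vm, ← hprodS (c * μ), ← hcompl, Finset.prod_mul_prod_compl]
    exact hprod (c * μ) hμ'
  exact mul_right_cancel₀ hQ (e1.trans e2.symm)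

private lemma exists_not_mem_of_card (s : Finset (Fin n)) (h : s.card < n) : ∃ a, a ∉ s := by
  by_contra hc
  push_neg at hc
  have : s = Finset.univ := Finset.eq_univ_iff_forall.mpr hc
  rw [this, Finset.card_univ, Fintype.card_fin] at h
  omega

private lemma minors (hn : 5 ≤ n) (C : Matrix (Fin n) (Fin n) K) (hC : ∀ i j, C i j ≠ 0)
    (s : ℤˣ)
    (hprod : ∀ μ : Equiv.Perm (Fin n), Equiv.Perm.sign μ = s → ∏ x, C x (μ x) = 1)
    (hexists : ∀ (i k m j l q : Fin n), i ≠ k → i ≠ m → k ≠ m → j ≠ l → j ≠ q → l ≠ q →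
      ∃ μ : Equiv.Perm (Fin n), Equiv.Perm.sign μ = s ∧ μ i = j ∧ μ k = l ∧ μ m = q)
    (i i' j j' : Fin n) :
    C i j * C i' j' = C i j' * C i' j := by
  classical
  by_cases hii : i = i'
  · subst hii; ring
  by_cases hjj : j = j'
  · subst hjj; ring
  obtain ⟨k, hk⟩ := exists_not_mem_of_card {i, i'} (by
    calc ({i, i'} : Finset (Fin n)).card ≤ 2 := by
          refine (Finset.card_insert_le _ _).trans ?_; simp
      _ < n := by omega)
  obtain ⟨m, hm⟩ := exists_not_mem_of_card {i, i', k} (by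
    calc ({i, i', k} : Finset (Fin n)).card ≤ 3 := by
          refine (Finset.card_insert_le _ _).trans ?_
          refine Nat.add_le_add_right ?_ 1
          refine (Finset.card_insert_le _ _).trans ?_; simp
      _ < n := by omega)
  obtain ⟨q, hq⟩ := exists_not_mem_of_card {j, j'} (by
    calc ({j, j'} : Finset (Fin n)).card ≤ 2 := by
          refine (Finset.card_insert_le _ _).trans ?_; simp
      _ < n := by omega)
  simp only [Finset.mem_insert, Finset.mem_singleton, not_or] at hk hm hq
  have hik : i ≠ k := fun h => hk.1 h.symm
  have hi'k : i' ≠ k := fun h => hk.2 h.symm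
  have him : i ≠ m := fun h => hm.1 h.symm
  have hi'm : i' ≠ m := fun h => hm.2.1 h.symm
  have hkm : k ≠ m := fun h => hm.2.2 h.symm
  have hjq : j ≠ q := fun h => hq.1 h.symm
  have hj'q : j' ≠ q := fun h => hq.2 h.symm
  have E1 := three_term C hC s hprod hexists hik him hkm hjj hjq hj'q
  have E2 := three_term C hC s hprod hexists hi'k hi'm hkm hjj hjq hj'q
  have hne : C k j' * C m q ≠ 0 := mul_ne_zero (hC _ _) (hC _ _)
  have key : (C i j * C i' j') * (C k j' * C m q) = (C i j' * C i' j) * (C k j' * C m q) := by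
    calc (C i j * C i' j') * (C k j' * C m q)
        = C i' j' * (C i j * (C k j' * C m q)) := by ring
      _ = C i' j' * (C i j' * (C k q * C m j)) := by rw [E1]
      _ = C i j' * (C i' j' * (C k q * C m j)) := by ring
      _ = C i j' * (C i' j * (C k j' * C m q)) := by rw [← E2]
      _ = (C i j' * C i' j) * (C k j' * C m q) := by ring
  exact mul_right_cancel₀ hne key

private lemma rank_one_of_minors (hn : 0 < n) (C : Matrix (Fin n) (Fin n) K)
    (hC : ∀ i j, C i j ≠ 0)
    (hmin : ∀ i i' j j', C i j * C i' j' = C i j' * C i' j) :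
    C.rank = 1 := by
  classical
  set i₀ : Fin n := ⟨0, hn⟩ with hi₀
  have hfac : C = (Matrix.of fun i (_ : Fin 1) => C i i₀)
      * (Matrix.of fun (_ : Fin 1) j => (C i₀ i₀)⁻¹ * C i₀ j) := by
    ext i j
    simp only [Matrix.mul_apply, Fin.sum_univ_one, Matrix.of_apply]
    field_simp [hC i₀ i₀]
    linear_combination hmin i i₀ j i₀
  have hle : C.rank ≤ 1 := by
    rw [hfac]
    refine le_trans (Matrix.rank_mul_le_left _ _) ?_
    simpa using Matrix.rank_le_card_width (Matrix.of fun i (_ : Fin 1) => C i i₀)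
  have hpos : 0 < C.rank := by
    rw [Matrix.rank]
    have h0 : C.mulVec (Pi.single i₀ 1) ≠ 0 := by
      intro h
      have h2 := congrFun h i₀
      rw [Matrix.mulVec_single] at h2
      simp at h2
      exact hC i₀ i₀ h2
    have : Nontrivial (LinearMap.range C.mulVecLin) := by
      refine nontrivial_of_ne ⟨C.mulVec (Pi.single i₀ 1), ?_⟩ 0 ?_
      · exact ⟨Pi.single i₀ 1, rfl⟩
      · simpa [Submodule.mk_eq_zero] using h0
    exact Module.finrank_pos
  omega

end AuxLemmas

/-- for `n ≥ 5` and `α ≠ ±β`, if `T` stabilizes `det^{(α,β)}` and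
`T(A) = C ∗ (P·A·Q)` for all `A` (or `T(A) = C ∗ (P·Aᵀ·Q)` for all `A`) with all entries of
`C` nonzero and `sgn σ · sgn τ = 1`, then `rank C = 1`. -/
theorem rank_hadamard_coefficient_matrix {K : Type*} [Field K] [CharZero K]
    {n : ℕ} (hn : 5 ≤ n) (α β : K) (hαβ : α ≠ β) (hαβ' : α ≠ -β)
    (T : Matrix (Fin n) (Fin n) K ≃ₗ[K] Matrix (Fin n) (Fin n) K)
    (hT : ∀ A, gdet α β (T A) = gdet α β A)
    (σ τ : Equiv.Perm (Fin n)) (C : Matrix (Fin n) (Fin n) K)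
    (hsgn : Equiv.Perm.sign σ * Equiv.Perm.sign τ = 1)
    (hC : ∀ i j : Fin n, C i j ≠ 0)
    (hform : (∀ A, T A = Matrix.hadamard C (permMat K σ * A * permMat K τ)) ∨
             (∀ A, T A = Matrix.hadamard C (permMat K σ * Aᵀ * permMat K τ))) :
    C.rank = 1 := by
  classical
  -- choose a sign `s` whose weight is nonzero
  obtain ⟨s, hw⟩ : ∃ s : ℤˣ, (if s = 1 then α else β) ≠ 0 := by
    by_cases hα : α = 0
    · refine ⟨-1, ?_⟩
      have : ((-1 : ℤˣ) = 1) = False := by simp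
      rw [if_neg (by decide)]
      intro hβ
      exact hαβ (by rw [hα, hβ])
    · exact ⟨1, by simpa using hα⟩
  -- the key multiplicative identities
  have hprod : ∀ μ : Equiv.Perm (Fin n), Equiv.Perm.sign μ = s → ∏ x, C x (μ x) = 1 := by
    intro μ hμ
    rcases hform with hf | hf
    · set ρ : Equiv.Perm (Fin n) := τ * μ * σ with hρ
      have hρsign : Equiv.Perm.sign ρ = Equiv.Perm.sign μ := by
        rw [hρ, Equiv.Perm.sign_mul, Equiv.Perm.sign_mul]
        rcases Int.units_eq_one_or (Equiv.Perm.sign σ) with h1 | h1 <;>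
          rcases Int.units_eq_one_or (Equiv.Perm.sign τ) with h2 | h2 <;>
            rw [h1, h2] at hsgn ⊢ <;> simp_all
      have hTA : T (Matrix.of fun x y => if y = ρ x then (1 : K) else 0)
          = Matrix.of fun x y => if y = μ x then C x (μ x) else 0 := by
        rw [hf]
        ext x y
        rw [Matrix.hadamard_apply, permMat_mul_mul_apply]
        simp only [Matrix.of_apply]
        by_cases h : y = μ x
        · subst h
          rw [if_pos rfl, if_pos, mul_one]
          simp [hρ, Equiv.Perm.mul_apply]
        · rw [if_neg h, if_neg, mul_zero]
          intro hcon
          apply h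
          have : y = τ⁻¹ (ρ (σ⁻¹ x)) := by rw [← hcon]; simp
          rw [this]
          simp [hρ, Equiv.Perm.mul_apply]
      have h1 := hT (Matrix.of fun x y => if y = ρ x then (1 : K) else 0)
      rw [hTA] at h1
      have h2 : gdet α β (Matrix.of fun x y => if y = μ x then C x (μ x) else 0)
          = (if Equiv.Perm.sign μ = 1 then α else β) * ∏ x, C x (μ x) :=
        gdet_select α β (fun x => C x (μ x)) μ
      have h3 : gdet α β (Matrix.of fun x y => if y = ρ x then (1 : K) else 0)
          = (if Equiv.Perm.sign ρ = 1 then α else β) := by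
        rw [gdet_select α β (fun _ => (1 : K)) ρ]
        simp
      rw [h2, h3, hρsign, hμ] at h1
      exact mul_left_cancel₀ hw (by rw [h1, mul_one])
    · set ρ : Equiv.Perm (Fin n) := σ⁻¹ * μ⁻¹ * τ⁻¹ with hρ
      have hρsign : Equiv.Perm.sign ρ = Equiv.Perm.sign μ := by
        rw [hρ, Equiv.Perm.sign_mul, Equiv.Perm.sign_mul, Equiv.Perm.sign_inv,
          Equiv.Perm.sign_inv, Equiv.Perm.sign_inv]
        rcases Int.units_eq_one_or (Equiv.Perm.sign σ) with h1 | h1 <;>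
          rcases Int.units_eq_one_or (Equiv.Perm.sign τ) with h2 | h2 <;>
            rw [h1, h2] at hsgn ⊢ <;> simp_all
      have hTA : T (Matrix.of fun x y => if y = ρ x then (1 : K) else 0)
          = Matrix.of fun x y => if y = μ x then C x (μ x) else 0 := by
        rw [hf]
        ext x y
        rw [Matrix.hadamard_apply, permMat_mul_mul_apply]
        simp only [Matrix.transpose_apply, Matrix.of_apply]
        by_cases h : y = μ x
        · subst h
          rw [if_pos rfl, if_pos, mul_one]
          simp [hρ, Equiv.Perm.mul_apply]
        · rw [if_neg h, if_neg, mul_zero]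
          intro hcon
          apply h
          have : σ⁻¹ x = ρ (τ y) := hcon
          rw [hρ] at this
          simp only [Equiv.Perm.mul_apply] at this
          have h4 : μ⁻¹ (τ⁻¹ (τ y)) = μ⁻¹ y := by simp
          rw [h4] at this
          have h5 : x = μ⁻¹ y := by
            have := congrArg σ this
            simpa using this
          rw [h5]
          simp
      have h1 := hT (Matrix.of fun x y => if y = ρ x then (1 : K) else 0)
      rw [hTA] at h1
      have h2 : gdet α β (Matrix.of fun x y => if y = μ x then C x (μ x) else 0)
          = (if Equiv.Perm.sign μ = 1 then α else β) * ∏ x, C x (μ x) :=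
        gdet_select α β (fun x => C x (μ x)) μ
      have h3 : gdet α β (Matrix.of fun x y => if y = ρ x then (1 : K) else 0)
          = (if Equiv.Perm.sign ρ = 1 then α else β) := by
        rw [gdet_select α β (fun _ => (1 : K)) ρ]
        simp
      rw [h2, h3, hρsign, hμ] at h1
      exact mul_left_cancel₀ hw (by rw [h1, mul_one])
  exact rank_one_of_minors (by omega) C hC
    (minors hn C hC s hprod
      (fun i k m j l q h1 h2 h3 h4 h5 h6 => exists_perm_prescribed hn s h1 h2 h3 h4 h5 h6))
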